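/- arXiv:2512.10779 — 2 statements merged into one kernel-verified Lean document; each statement's English description precedes it below -/
import Mathlib

section
/- For every proof-relevant RLC-frame, the strong endofunctor ◇ of Psh(W) = W ⥤ Type is strong pointed: the maps point_{P,w} : P(w) → (◇P)(w) given by point(p) = (w, reflR w, p) form a natural transformation Id ⟶ ◇ (natural in w and in P), and this point is a strong natural transformation, i.e. σ_{P,Q} ∘ (id_P × point_Q) = point_{P×Q} for all presheaves P, Q. -/
open CategoryTheory

/-- A proof-relevant SLC-frame: a category `W` of worlds, a proof-relevant
modal relation `R`, an inclusion `incl` of `R` into the morphisms of `W`, and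
a forward-confluence operation `factor` (split into the resulting world
`factorW`, the modal proof `factor₁` and the intuitionistic proof `factor₂`),
subject to the coherence laws. -/
structure SLCFrame where
  W : Type
  [instCat : Category.{0} W]
  R : W → W → Type
  incl : ∀ {w v : W}, R w v → (w ⟶ v)
  factorW : ∀ {w w' v : W}, (w ⟶ w') → R w v → W
  factor₁ : ∀ {w w' v : W} (i : w ⟶ w') (m : R w v), R w' (factorW i m)
  factor₂ : ∀ {w w' v : W} (i : w ⟶ w') (m : R w v), v ⟶ factorW i m
  factorW_id : ∀ {w v : W} (m : R w v), factorW (𝟙 w) m = v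
  factor₁_id : ∀ {w v : W} (m : R w v), HEq (factor₁ (𝟙 w) m) m
  factor₂_id : ∀ {w v : W} (m : R w v), HEq (factor₂ (𝟙 w) m) (𝟙 v)
  factorW_comp : ∀ {w w' w'' v : W} (i : w ⟶ w') (j : w' ⟶ w'') (m : R w v),
    factorW (i ≫ j) m = factorW j (factor₁ i m)
  factor₁_comp : ∀ {w w' w'' v : W} (i : w ⟶ w') (j : w' ⟶ w'') (m : R w v),
    HEq (factor₁ (i ≫ j) m) (factor₁ j (factor₁ i m))
  factor₂_comp : ∀ {w w' w'' v : W} (i : w ⟶ w') (j : w' ⟶ w'') (m : R w v),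
    HEq (factor₂ (i ≫ j) m) (factor₂ i m ≫ factor₂ j (factor₁ i m))
  incl_natural : ∀ {w w' v : W} (i : w ⟶ w') (m : R w v),
    incl m ≫ factor₂ i m = i ≫ incl (factor₁ i m)

attribute [instance] SLCFrame.instCat

variable (F : SLCFrame)

/-- The object part of the presheaf `◇P`: `(◇P)(w) = Σ v, (w R v) × P(v)`. -/
def DiaObj (P : F.W ⥤ Type) (w : F.W) : Type :=
  Σ v : F.W, F.R w v × P.obj v

/-- Transport of `◇P` along `i : w ⟶ w'`, via `factor`. -/
def DiaMap (P : F.W ⥤ Type) {w w' : F.W} (i : w ⟶ w') :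
    DiaObj F P w → DiaObj F P w' :=
  fun x => ⟨F.factorW i x.2.1, F.factor₁ i x.2.1, P.map (F.factor₂ i x.2.1) x.2.2⟩

/-- The action of `◇` on a natural transformation `f : P ⟶ Q`, componentwise. -/
def DiaHom {P Q : F.W ⥤ Type} (f : P ⟶ Q) (w : F.W) :
    DiaObj F P w → DiaObj F Q w :=
  fun x => ⟨x.1, x.2.1, f.app x.1 x.2.2⟩

/-- The pointwise product of presheaves. -/
def ProdPsh (P Q : F.W ⥤ Type) : F.W ⥤ Type where
  obj w := P.obj w × Q.obj w
  map i := TypeCat.ofHom fun x => (P.map i x.1, Q.map i x.2)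
  map_id := by intro w; ext x <;> simp
  map_comp := by intro w w' w'' i j; ext x <;> simp

/-- The terminal (unit) presheaf. -/
def UnitPsh : F.W ⥤ Type where
  obj _ := PUnit
  map _ := TypeCat.ofHom fun x => x

/-- The strength map `σ_{P,Q,w} : P(w) × (◇Q)(w) → (◇(P × Q))(w)`. -/
def Strength (P Q : F.W ⥤ Type) (w : F.W) :
    P.obj w × DiaObj F Q w → DiaObj F (ProdPsh F P Q) w :=
  fun x => ⟨x.2.1, x.2.2.1, (P.map (F.incl x.2.2.1) x.1, x.2.2.2)⟩

/-- A proof-relevant RLC-frame: an SLC-frame further equipped with a reflexivity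
proof `reflR` for `R`, coherent with `factor` and `incl`. -/
structure RLCFrame extends SLCFrame where
  reflR : ∀ w : W, R w w
  factorW_refl : ∀ {w w' : W} (i : w ⟶ w'), factorW i (reflR w) = w'
  factor₁_refl : ∀ {w w' : W} (i : w ⟶ w'), HEq (factor₁ i (reflR w)) (reflR w')
  factor₂_refl : ∀ {w w' : W} (i : w ⟶ w'), HEq (factor₂ i (reflR w)) i
  incl_refl : ∀ w : W, incl (reflR w) = 𝟙 w

/-- The point map `point_{P,w} : P(w) → (◇P)(w)`, `p ↦ (w, reflR w, p)`. -/
def Point (F : RLCFrame) (P : F.W ⥤ Type) (w : F.W) :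
    P.obj w → DiaObj F.toSLCFrame P w :=
  fun p => ⟨w, F.reflR w, p⟩

namespace SLCFrame

theorem diaMap_mk_of_factor {P : F.W ⥤ Type} {w w' v v' : F.W} (i : w ⟶ w') (m : F.R w v)
    {m' : F.R w' v'} {j : v ⟶ v'} (hW : F.factorW i m = v') (h₁ : HEq (F.factor₁ i m) m')
    (h₂ : HEq (F.factor₂ i m) j) (p : P.obj v) :
    DiaMap F P i ⟨v, m, p⟩ = ⟨v', m', P.map j p⟩ := by
  change (⟨F.factorW i m, F.factor₁ i m, P.map (F.factor₂ i m) p⟩ : DiaObj F P w') = _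
  generalize F.factor₁ i m = a at h₁
  generalize F.factor₂ i m = b at h₂
  subst hW
  cases h₁
  cases h₂
  rfl

end SLCFrame

namespace RLCFrame

theorem diaMap_point (F : RLCFrame) (P : F.W ⥤ Type) {w w' : F.W} (i : w ⟶ w') (p : P.obj w) :
    DiaMap F.toSLCFrame P i (Point F P w p) = Point F P w' (P.map i p) :=
  SLCFrame.diaMap_mk_of_factor F.toSLCFrame i _ (F.factorW_refl i) (F.factor₁_refl i)
    (F.factor₂_refl i) p

theorem diaHom_point (F : RLCFrame) {P Q : F.W ⥤ Type} (f : P ⟶ Q) (w : F.W) (p : P.obj w) :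
    DiaHom F.toSLCFrame f w (Point F P w p) = Point F Q w (f.app w p) :=
  rfl

theorem strength_point (F : RLCFrame) (P Q : F.W ⥤ Type) (w : F.W) (x : P.obj w × Q.obj w) :
    Strength F.toSLCFrame P Q w (x.1, Point F Q w x.2) =
      Point F (ProdPsh F.toSLCFrame P Q) w x := by
  simp only [Strength, Point, F.incl_refl, P.map_id]
  rfl

end RLCFrame

/-- for every proof-relevant RLC-frame, the strong endofunctor `◇`
of `W ⥤ Type` is strong pointed: `point` is a natural transformation
`Id ⟶ ◇` (natural in `w` and in `P`) and it is strong, i.e.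
`σ_{P,Q} ∘ (id_P × point_Q) = point_{P×Q}`. -/
theorem dia_strong_pointed (F : RLCFrame) :
    -- point_P is a natural transformation P ⟶ ◇P (naturality in w)
    (∀ (P : F.W ⥤ Type) {w w' : F.W} (i : w ⟶ w') (p : P.obj w),
       DiaMap F.toSLCFrame P i (Point F P w p) = Point F P w' (P.map i p)) ∧
    -- point is natural in P
    (∀ (P Q : F.W ⥤ Type) (f : P ⟶ Q) (w : F.W) (p : P.obj w),
       DiaHom F.toSLCFrame f w (Point F P w p) = Point F Q w (f.app w p)) ∧
    -- point is a strong natural transformation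
    (∀ (P Q : F.W ⥤ Type) (w : F.W) (x : P.obj w × Q.obj w),
       Strength F.toSLCFrame P Q w (x.1, Point F Q w x.2) =
         Point F (ProdPsh F.toSLCFrame P Q) w x) :=
  ⟨F.diaMap_point, fun _ _ f => F.diaHom_point f, F.strength_point⟩
end

section
/- For every proof-relevant SLC-frame, the endofunctors ◇ and ○ of Psh(W) = W ⥤ Type are naturally isomorphic: there is an isomorphism ◇P ≅ ○P natural in the presheaf P, whose component at a world w sends (v, m, p) to the family i ↦ (v*, factor₁ i m, P(factor₂ i m)(p)) and whose inverse evaluates a family at the identity morphism 𝟙 w. -/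
open CategoryTheory

variable (F : SLCFrame)

/-- The object part of the presheaf `○P`: natural families `f` assigning to
each `i : w ⟶ w'` a triple in `Σ v, (w' R v) × P(v)`, natural in the sense
that `f (i ≫ j) = (◇P)(j)(f i)`. -/
def CircObj (P : F.W ⥤ Type) (w : F.W) : Type :=
  { f : ∀ w' : F.W, (w ⟶ w') → DiaObj F P w' //
    ∀ (w' w'' : F.W) (i : w ⟶ w') (j : w' ⟶ w''),
      f w'' (i ≫ j) = DiaMap F P j (f w' i) }

/-- Transport of `○P` along `h : w ⟶ w'`: precomposition. -/
def CircMap (P : F.W ⥤ Type) {w w' : F.W} (h : w ⟶ w') :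
    CircObj F P w → CircObj F P w' :=
  fun f => ⟨fun w'' i => f.1 w'' (h ≫ i), by
    intro w'' w''' i j
    show f.1 w''' (h ≫ i ≫ j) = DiaMap F P j (f.1 w'' (h ≫ i))
    rw [← Category.assoc]
    exact f.2 _ _ (h ≫ i) j⟩

/-! A natural family `f ∈ (○P)(w)` is determined by its value at the identity, since
naturality gives `f i = f (𝟙 w ≫ i) = (◇P)(i) (f (𝟙 w))`. Conversely every `x ∈ (◇P)(w)`
spreads out to the natural family `i ↦ (◇P)(i) x`; that this family is natural is exactly
the functoriality of `◇P`, which is where the coherence laws of `factor` enter. -/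

namespace DiaObj

variable {F : SLCFrame} {P : F.W ⥤ Type}

theorem ext_of_heq {w v v' : F.W} (hv : v = v') {m : F.R w v} {m' : F.R w v'}
    {p : P.obj v} {p' : P.obj v'} (hm : HEq m m') (hp : HEq p p') :
    (⟨v, m, p⟩ : DiaObj F P w) = ⟨v', m', p'⟩ := by
  subst hv
  rw [eq_of_heq hm, eq_of_heq hp]

end DiaObj

theorem map_apply_heq_of_heq {C : Type*} [Category C] (P : C ⥤ Type) {u v v' : C}
    (hv : v = v') {f : u ⟶ v} {g : u ⟶ v'} (hfg : HEq f g) (p : P.obj u) :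
    HEq (P.map f p) (P.map g p) := by
  subst hv
  rw [eq_of_heq hfg]

section Dia

variable (F : SLCFrame) (P : F.W ⥤ Type)

theorem DiaMap_id (w : F.W) (x : DiaObj F P w) : DiaMap F P (𝟙 w) x = x := by
  obtain ⟨v, m, p⟩ := x
  refine DiaObj.ext_of_heq (F.factorW_id m) (F.factor₁_id m) ?_
  refine (map_apply_heq_of_heq P (F.factorW_id m) (F.factor₂_id m) p).trans ?_
  rw [P.map_id]
  rfl

theorem DiaMap_comp {w w' w'' : F.W} (i : w ⟶ w') (j : w' ⟶ w'') (x : DiaObj F P w) :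
    DiaMap F P (i ≫ j) x = DiaMap F P j (DiaMap F P i x) := by
  obtain ⟨v, m, p⟩ := x
  refine DiaObj.ext_of_heq (F.factorW_comp i j m) (F.factor₁_comp i j m) ?_
  refine (map_apply_heq_of_heq P (F.factorW_comp i j m) (F.factor₂_comp i j m) p).trans ?_
  rw [P.map_comp]
  rfl

theorem DiaMap_DiaHom {Q : F.W ⥤ Type} (f : P ⟶ Q) {w w' : F.W} (i : w ⟶ w')
    (x : DiaObj F P w) :
    DiaMap F Q i (DiaHom F f w x) = DiaHom F f w' (DiaMap F P i x) := by
  obtain ⟨v, m, p⟩ := x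
  exact congrArg (fun q => (⟨_, _, q⟩ : DiaObj F Q w'))
    (NatTrans.naturality_apply f (F.factor₂ i m) p).symm

def diaToCirc {w : F.W} (x : DiaObj F P w) : CircObj F P w :=
  ⟨fun _ i => DiaMap F P i x, fun _ _ i j => DiaMap_comp F P i j x⟩

theorem CircObj.eq_DiaMap_apply_id {w w' : F.W} (f : CircObj F P w) (i : w ⟶ w') :
    f.1 w' i = DiaMap F P i (f.1 w (𝟙 w)) := by
  rw [← f.2 w w' (𝟙 w) i, Category.id_comp]

def diaEquivCirc (w : F.W) : DiaObj F P w ≃ CircObj F P w where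
  toFun := diaToCirc F P
  invFun f := f.1 w (𝟙 w)
  left_inv := DiaMap_id F P w
  right_inv f := Subtype.ext <| funext fun _ => funext fun i =>
    (CircObj.eq_DiaMap_apply_id F P f i).symm

theorem diaToCirc_DiaMap {w w' : F.W} (h : w ⟶ w') (x : DiaObj F P w) :
    diaToCirc F P (DiaMap F P h x) = CircMap F P h (diaToCirc F P x) :=
  Subtype.ext <| funext fun _ => funext fun i => (DiaMap_comp F P h i x).symm

end Dia

/-- for every proof-relevant SLC-frame, `◇` and `○` are naturally
isomorphic: there is a family of maps `α : (◇P)(w) → (○P)(w)`, sending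
`(v, m, p)` to the family `i ↦ (v*, factor₁ i m, P(factor₂ i m)(p))`, which is
a bijection whose inverse evaluates a family at the identity morphism, and
which is natural in the world `w` and in the presheaf `P`. -/
theorem dia_iso_circ (F : SLCFrame) :
    ∃ α : ∀ (P : F.W ⥤ Type) (w : F.W), DiaObj F P w → CircObj F P w,
      -- the component at w sends (v, m, p) to i ↦ (v*, factor₁ i m, P (factor₂ i m) p)
      (∀ (P : F.W ⥤ Type) (w : F.W) (x : DiaObj F P w) (w' : F.W) (i : w ⟶ w'),
         (α P w x).1 w' i = DiaMap F P i x) ∧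
      -- evaluation at the identity is a left inverse of α
      (∀ (P : F.W ⥤ Type) (w : F.W) (x : DiaObj F P w),
         (α P w x).1 w (𝟙 w) = x) ∧
      -- evaluation at the identity is a right inverse of α
      (∀ (P : F.W ⥤ Type) (w : F.W) (f : CircObj F P w),
         α P w (f.1 w (𝟙 w)) = f) ∧
      -- α is natural in w
      (∀ (P : F.W ⥤ Type) {w w' : F.W} (h : w ⟶ w') (x : DiaObj F P w),
         α P w' (DiaMap F P h x) = CircMap F P h (α P w x)) ∧
      -- α is natural in P
      (∀ (P Q : F.W ⥤ Type) (f : P ⟶ Q) (w : F.W) (x : DiaObj F P w)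
         (w' : F.W) (i : w ⟶ w'),
         (α Q w (DiaHom F f w x)).1 w' i = DiaHom F f w' ((α P w x).1 w' i)) :=
  ⟨fun P w => diaEquivCirc F P w,
    fun _ _ _ _ _ => rfl,
    fun P w => (diaEquivCirc F P w).left_inv,
    fun P w => (diaEquivCirc F P w).right_inv,
    fun P _ _ h x => diaToCirc_DiaMap F P h x,
    fun P _ f _ x _ i => DiaMap_DiaHom F P f i x⟩
end
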